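/- arXiv:2503.21216 — 8 statements merged into one kernel-verified Lean document; each statement's English description precedes it below -/
import Mathlib

section
/- Let C be an idempotent complete additive category. An indecomposable object A of C has the finite exchange property if and only if End(A) is a local ring. -/
open CategoryTheory CategoryTheory.Limits

/-- Finite exchange property for an object of an additive category. -/
def FinExchange {C : Type*} [Category C] [Preadditive C] [HasFiniteBiproducts C]
    [HasBinaryBiproducts C] (A : C) : Prop :=
  ∀ (n : ℕ) (B : Fin n → C) (u : A ⟶ ⨁ B), IsSplitMono u →
    ∃ (Cc Dd : Fin n → C) (v : ∀ i, Cc i ⟶ B i) (w : ∀ i, Dd i ⟶ B i),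
      (∀ i, IsIso (biprod.desc (v i) (w i))) ∧
      IsIso (biprod.desc u (biproduct.desc (fun i => v i ≫ biproduct.ι B i)))

/-- An object is indecomposable if it is nonzero and in any direct sum decomposition one of
the summands is zero. -/
def IndecomposableObj {C : Type*} [Category C] [Preadditive C] [HasBinaryBiproducts C]
    (A : C) : Prop :=
  ¬ IsZero A ∧ ∀ (B D : C), Nonempty (A ≅ B ⊞ D) → IsZero B ∨ IsZero D

/-!
If `End A` is local and `u : A ⟶ ⨁ Bᵢ` has a retraction `r`, the endomorphisms `u πᵢ ιᵢ r` of `A`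
sum to `1`, so one of them, say the `j`-th, is a unit. Then `A` is mapped isomorphically onto the
image of an idempotent of `B j`, and the complement of that image in `B j`, together with all other
`Bᵢ`, is a complement of `A` in `⨁ Bᵢ`.

Conversely, for `f : End A`, the exchange property for `(f, 1 - f) : A ⟶ A ⊞ A` produces `x, y`
with `f x` and `(1 - f) y` idempotent and `x f + y (1 - f) = 1`. Idempotents of an indecomposable
object of an idempotent complete category are trivial, and this forces `f` or `1 - f` to be a unit.
-/

section Ring

variable {R : Type*}

theorem IsLocalRing.exists_isUnit_of_isUnit_sum [Semiring R] [IsLocalRing R] {ι : Type*}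
    {s : Finset ι} {f : ι → R} (h : IsUnit (∑ i ∈ s, f i)) : ∃ i ∈ s, IsUnit (f i) := by
  classical
  induction s using Finset.cons_induction with
  | empty => simp at h
  | cons a s ha ih =>
    rw [Finset.sum_cons] at h
    rcases IsLocalRing.isUnit_or_isUnit_of_isUnit_add h with ha | hs
    · exact ⟨a, Finset.mem_cons_self a s, ha⟩
    · obtain ⟨i, hi, hfi⟩ := ih hs
      exact ⟨i, Finset.mem_cons_of_mem hi, hfi⟩

variable [Ring R] [Nontrivial R]

theorem isDedekindFiniteMonoid_of_isIdempotentElem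
    (hidem : ∀ e : R, IsIdempotentElem e → e = 0 ∨ e = 1) : IsDedekindFiniteMonoid R where
  mul_eq_one_symm {a b} hab := by
    have hba : IsIdempotentElem (b * a) := by
      rw [IsIdempotentElem, mul_assoc, ← mul_assoc a, hab, one_mul]
    refine (hidem _ hba).resolve_left fun h => one_ne_zero (α := R) ?_
    calc (1 : R) = a * b * (a * b) := by rw [hab, one_mul]
      _ = a * (b * a) * b := by simp only [mul_assoc]
      _ = 0 := by rw [h, mul_zero, zero_mul]

theorem isUnit_or_isUnit_one_sub_of_isIdempotentElem
    (hidem : ∀ e : R, IsIdempotentElem e → e = 0 ∨ e = 1) {a x y : R}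
    (hx : IsIdempotentElem (a * x)) (hy : IsIdempotentElem ((1 - a) * y))
    (hsum : x * a + y * (1 - a) = 1) : IsUnit a ∨ IsUnit (1 - a) := by
  have := isDedekindFiniteMonoid_of_isIdempotentElem hidem
  rcases hidem _ hx with hax | hax
  · rcases hidem _ hy with hay | hay
    · have hnil : IsNilpotent (x * a) :=
        ⟨2, by rw [pow_two, mul_assoc, ← mul_assoc a, hax, zero_mul, mul_zero]⟩
      have hsq : y * (1 - a) * (y * (1 - a)) = 0 := by
        rw [mul_assoc, ← mul_assoc (1 - a), hay, zero_mul, mul_zero]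
      have hunit : IsUnit (y * (1 - a)) := by
        rw [eq_sub_of_add_eq' hsum]
        exact hnil.isUnit_one_sub
      exact absurd (hunit.mul_left_eq_zero.mp hsq ▸ hunit) not_isUnit_zero
    · exact Or.inr (IsUnit.of_mul_eq_one _ hay)
  · exact Or.inl (IsUnit.of_mul_eq_one _ hax)

end Ring

section Biproducts

variable {C : Type*} [Category C] [Preadditive C]

theorem biproduct.desc_comp_ι_eq_map {J : Type*} [Finite J] [HasFiniteBiproducts C] {f g : J → C}
    (p : ∀ j, f j ⟶ g j) :
    (biproduct.desc fun j => p j ≫ biproduct.ι g j) = biproduct.map p :=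
  biproduct.hom_ext' _ _ fun j => by simp

variable [HasBinaryBiproducts C]

theorem isIso_biprod_desc_of_total {X Y Z : C} {f : X ⟶ Z} {g : Y ⟶ Z} {p : Z ⟶ X}
    {q : Z ⟶ Y} (hfp : f ≫ p = 𝟙 X) (hfq : f ≫ q = 0) (hgp : g ≫ p = 0) (hgq : g ≫ q = 𝟙 Y)
    (htot : p ≫ f + q ≫ g = 𝟙 Z) : IsIso (biprod.desc f g) :=
  (biprod.uniqueUpToIso X Y
    (isBinaryBilimitOfTotal ⟨Z, p, q, f, g, hfp, hfq, hgp, hgq⟩ htot)).isIso_inv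

theorem exists_retraction_of_isIso_biprod_desc {X Y Z : C} (f : X ⟶ Z) (g : Y ⟶ Z)
    [IsIso (biprod.desc f g)] :
    ∃ (p : Z ⟶ X) (q : Z ⟶ Y), f ≫ p = 𝟙 X ∧ g ≫ p = 0 ∧ p ≫ f + q ≫ g = 𝟙 Z := by
  refine ⟨inv (biprod.desc f g) ≫ biprod.fst, inv (biprod.desc f g) ≫ biprod.snd, ?_, ?_, ?_⟩
  · rw [← biprod.inl_desc_assoc f g, IsIso.hom_inv_id_assoc, biprod.inl_fst]
  · rw [← biprod.inr_desc_assoc f g, IsIso.hom_inv_id_assoc, biprod.inr_fst]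
  · rw [Category.assoc, Category.assoc, ← Preadditive.comp_add, ← biprod.desc_eq,
      IsIso.inv_hom_id]

theorem exists_isIso_biprod_desc_of_idem [IsIdempotentComplete C] {X : C} {e : X ⟶ X}
    (he : e ≫ e = e) :
    ∃ (Y Z : C) (v : Y ⟶ X) (q : X ⟶ Y) (w : Z ⟶ X) (ρ : X ⟶ Z),
      v ≫ q = 𝟙 Y ∧ q ≫ v = 𝟙 X - e ∧ ρ ≫ w = e ∧ IsIso (biprod.desc v w) := by
  have hce : (𝟙 X - e) ≫ e = 0 := by rw [Preadditive.sub_comp, he, Category.id_comp, sub_self]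
  have hec : e ≫ (𝟙 X - e) = 0 := by rw [Preadditive.comp_sub, he, Category.comp_id, sub_self]
  obtain ⟨Y, v, q, hvq, hqv⟩ := IsIdempotentComplete.idempotents_split X (𝟙 X - e)
    (by rw [Preadditive.comp_sub, Category.comp_id, hce, sub_zero])
  obtain ⟨Z, w, ρ, hwρ, hρw⟩ := IsIdempotentComplete.idempotents_split X e he
  have hv : v ≫ (𝟙 X - e) = v := by rw [← hqv, reassoc_of% hvq]
  have hq : (𝟙 X - e) ≫ q = q := by rw [← hqv, Category.assoc, hvq, Category.comp_id]
  have hw : w ≫ e = w := by rw [← hρw, reassoc_of% hwρ]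
  have hρ : e ≫ ρ = ρ := by rw [← hρw, Category.assoc, hwρ, Category.comp_id]
  have hvρ : v ≫ ρ = 0 := calc
    v ≫ ρ = v ≫ (𝟙 X - e) ≫ e ≫ ρ := by rw [hρ, reassoc_of% hv]
    _ = 0 := by rw [reassoc_of% hce, zero_comp, comp_zero]
  have hwq : w ≫ q = 0 := calc
    w ≫ q = w ≫ e ≫ (𝟙 X - e) ≫ q := by rw [hq, reassoc_of% hw]
    _ = 0 := by rw [reassoc_of% hec, zero_comp, comp_zero]
  refine ⟨Y, Z, v, q, w, ρ, hvq, hqv, hρw, isIso_biprod_desc_of_total hvq hvρ hwq hwρ ?_⟩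
  rw [hqv, hρw, sub_add_cancel]

end Biproducts

section Exchange

variable {C : Type*} [Category C] [Preadditive C] [HasBinaryBiproducts C]

theorem IndecomposableObj.eq_zero_or_eq_one_of_isIdempotentElem [IsIdempotentComplete C] {A : C}
    (hA : IndecomposableObj A) (e : End A) (he : IsIdempotentElem e) : e = 0 ∨ e = 1 := by
  obtain ⟨Y, Z, v, q, w, ρ, -, hqv, hρw, hiso⟩ := exists_isIso_biprod_desc_of_idem he
  refine (hA.2 Y Z ⟨(asIso (biprod.desc v w)).symm⟩).symm.imp (fun hZ => ?_) (fun hY => ?_)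
  · rw [← hρw, hZ.eq_of_src w 0, comp_zero]
  · rw [eq_comm, ← sub_eq_zero]
    exact hqv.symm.trans (by rw [hY.eq_of_src v 0, comp_zero])

theorem isIso_biprod_desc_of_idem {A X Y : C} {u : A ⟶ X} {s : X ⟶ A} {v : Y ⟶ X}
    {q : X ⟶ Y} {M : X ⟶ X} (hus : u ≫ s = 𝟙 A) (hvq : v ≫ q = 𝟙 Y) (hqv : q ≫ v = 𝟙 X - M)
    (hMs : M ≫ s = s) (hsuM : s ≫ u ≫ M = M) : IsIso (biprod.desc u v) := by
  have hvs : v ≫ s = 0 := calc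
    v ≫ s = v ≫ (q ≫ v) ≫ s := by rw [← Category.assoc, reassoc_of% hvq]
    _ = 0 := by rw [hqv, Preadditive.sub_comp, hMs, Category.id_comp, sub_self, comp_zero]
  refine isIso_biprod_desc_of_total (q := q - s ≫ u ≫ q) hus ?_ hvs ?_ ?_
  · rw [Preadditive.comp_sub, reassoc_of% hus, sub_self]
  · rw [Preadditive.comp_sub, reassoc_of% hvs, zero_comp, hvq, sub_zero]
  · simp only [Preadditive.sub_comp, Category.assoc, hqv, Preadditive.comp_sub, Category.comp_id,
      hsuM]
    abel

variable [HasFiniteBiproducts C]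

theorem FinExchange.exists_retraction_isIdempotentElem {A : C} (hA : FinExchange A) {n : ℕ}
    {B : Fin n → C} (u : A ⟶ ⨁ B) [IsSplitMono u] :
    ∃ s : ⨁ B ⟶ A, u ≫ s = 𝟙 A ∧
      ∀ i, IsIdempotentElem (M := End (B i)) (biproduct.ι B i ≫ s ≫ u ≫ biproduct.π B i) := by
  obtain ⟨Cc, -, v, -, -, hiso⟩ := hA n B u inferInstance
  rw [biproduct.desc_comp_ι_eq_map] at hiso
  obtain ⟨s, t, hus, hvs, htot⟩ := exists_retraction_of_isIso_biprod_desc u (biproduct.map v)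
  refine ⟨s, hus, fun i => ?_⟩
  set e := biproduct.ι B i ≫ s ≫ u ≫ biproduct.π B i
  obtain ⟨a, hsplit⟩ : ∃ a, e + a ≫ v i = 𝟙 (B i) :=
    ⟨biproduct.ι B i ≫ t ≫ biproduct.π Cc i,
      by simpa [e] using congrArg (fun m => biproduct.ι B i ≫ m ≫ biproduct.π B i) htot⟩
  have hve : v i ≫ e = 0 := by
    rw [← biproduct.ι_map_assoc, reassoc_of% hvs, zero_comp, comp_zero]
  show e ≫ e = e
  calc e ≫ e = (e + a ≫ v i) ≫ e := by
        rw [Preadditive.add_comp, Category.assoc a, hve, comp_zero, add_zero]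
    _ = e := by rw [hsplit, Category.id_comp]

theorem IndecomposableObj.isLocalRing_end_of_finExchange [IsIdempotentComplete C] {A : C}
    (hA : IndecomposableObj A) (hex : FinExchange A) : IsLocalRing (End A) := by
  have : Nontrivial (End A) := ⟨⟨1, 0, fun h => hA.1 ((IsZero.iff_id_eq_zero A).2 h)⟩⟩
  refine IsLocalRing.of_isUnit_or_isUnit_one_sub_self fun f => ?_
  let u : A ⟶ ⨁ fun _ : Fin 2 => A := biproduct.lift ![f, (1 - f : End A)]
  have : IsSplitMono u :=
    IsSplitMono.mk' ⟨biproduct.desc fun _ => 𝟙 A,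
      by simp [u, biproduct.lift_desc, Fin.sum_univ_two]⟩
  obtain ⟨s, hus, hidem⟩ := hex.exists_retraction_isIdempotentElem u
  refine isUnit_or_isUnit_one_sub_of_isIdempotentElem hA.eq_zero_or_eq_one_of_isIdempotentElem
    (x := biproduct.ι (fun _ => A) 0 ≫ s) (y := biproduct.ι (fun _ => A) 1 ≫ s) ?_ ?_ ?_
  · simpa [u] using hidem 0
  · simpa [u] using hidem 1
  · rw [← Category.id_comp s, ← biproduct.total, Preadditive.sum_comp, Preadditive.comp_sum,
      Fin.sum_univ_two] at hus
    simpa [u, End.mul_def] using hus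

variable [IsIdempotentComplete C]

theorem exists_exchange_of_idem {A : C} {n : ℕ} {B : Fin n → C} {u : A ⟶ ⨁ B}
    {s : ⨁ B ⟶ A} {e : ∀ i, B i ⟶ B i} (hus : u ≫ s = 𝟙 A) (he : ∀ i, e i ≫ e i = e i)
    (hMs : biproduct.map e ≫ s = s) (hsuM : s ≫ u ≫ biproduct.map e = biproduct.map e) :
    ∃ (Cc Dd : Fin n → C) (v : ∀ i, Cc i ⟶ B i) (w : ∀ i, Dd i ⟶ B i),
      (∀ i, IsIso (biprod.desc (v i) (w i))) ∧
      IsIso (biprod.desc u (biproduct.desc (fun i => v i ≫ biproduct.ι B i))) := by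
  choose Cc Dd v q w ρ hvq hqv _ hiso using fun i => exists_isIso_biprod_desc_of_idem (he i)
  refine ⟨Cc, Dd, v, w, hiso, ?_⟩
  rw [biproduct.desc_comp_ι_eq_map]
  refine isIso_biprod_desc_of_idem (q := biproduct.map q) hus ?_ ?_ hMs hsuM
  · exact biproduct.hom_ext' _ _ fun i => by simp [reassoc_of% (hvq i)]
  · exact biproduct.hom_ext' _ _ fun i => by simp [reassoc_of% (hqv i), Preadditive.sub_comp]

theorem exists_exchange_of_comp_π_comp_eq_id {A : C} {n : ℕ} {B : Fin n → C} {u : A ⟶ ⨁ B}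
    {j : Fin n} {t : B j ⟶ A} (hut : u ≫ biproduct.π B j ≫ t = 𝟙 A) :
    ∃ (Cc Dd : Fin n → C) (v : ∀ i, Cc i ⟶ B i) (w : ∀ i, Dd i ⟶ B i),
      (∀ i, IsIso (biprod.desc (v i) (w i))) ∧
      IsIso (biprod.desc u (biproduct.desc (fun i => v i ≫ biproduct.ι B i))) := by
  -- `e j = t ≫ u ≫ π_j` is an idempotent whose image is a copy of `A`, and `e i = 0` for `i ≠ j`;
  -- the `Cᵢ` will be the images of the `𝟙 - e i`.
  set e : ∀ i, B i ⟶ B i := fun i =>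
    biproduct.ι B i ≫ biproduct.π B j ≫ t ≫ u ≫ biproduct.π B i
  have hM : biproduct.map e = biproduct.π B j ≫ t ≫ u ≫ biproduct.π B j ≫ biproduct.ι B j := by
    refine biproduct.hom_ext' _ _ fun i => ?_
    rw [biproduct.ι_map]
    by_cases hij : i = j
    · subst hij
      simp [e]
    · simp [e, biproduct.ι_π_ne_assoc _ hij]
  have hMM : biproduct.map e ≫ biproduct.map e = biproduct.map e := by
    rw [hM]
    simp [reassoc_of% hut]
  refine exists_exchange_of_idem (s := biproduct.π B j ≫ t) (e := e) hut (fun i => ?_) ?_ ?_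
  · rw [← cancel_mono (biproduct.ι B i), Category.assoc, ← biproduct.ι_map,
      ← biproduct.ι_map_assoc, hMM]
  · rw [hM]
    simp [hut]
  · rw [hM]
    simp [reassoc_of% hut]

theorem finExchange_of_isLocalRing {A : C} [IsLocalRing (End A)] : FinExchange A := by
  intro n B u hu
  have hsum : ∑ i, u ≫ biproduct.π B i ≫ biproduct.ι B i ≫ retraction u = 𝟙 A := calc
    _ = u ≫ (∑ i, biproduct.π B i ≫ biproduct.ι B i) ≫ retraction u := by
      simp only [Preadditive.sum_comp, Preadditive.comp_sum, Category.assoc]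
    _ = 𝟙 A := by rw [biproduct.total, Category.id_comp, IsSplitMono.id]
  obtain ⟨j, -, hj⟩ := IsLocalRing.exists_isUnit_of_isUnit_sum (R := End A) (s := Finset.univ)
    (f := fun i => u ≫ biproduct.π B i ≫ biproduct.ι B i ≫ retraction u) (hsum ▸ isUnit_one)
  obtain ⟨g, hg⟩ := hj.exists_left_inv
  exact exists_exchange_of_comp_π_comp_eq_id (t := biproduct.ι B j ≫ retraction u ≫ g)
    (by simpa [End.mul_def] using hg)

end Exchange

/-- In an idempotent complete additive category, an indecomposable object `A` has the finite
exchange property if and only if `End A` is a local ring. -/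
theorem stmt_7 {C : Type*} [Category C] [Preadditive C] [HasFiniteBiproducts C]
    [HasBinaryBiproducts C] [IsIdempotentComplete C] (A : C) (hA : IndecomposableObj A) :
    FinExchange A ↔ IsLocalRing (End A) :=
  ⟨hA.isLocalRing_end_of_finExchange, fun _ => finExchange_of_isLocalRing⟩
end

section
/- Let C be an idempotent complete additive category and X = A₁ ⊕ ⋯ ⊕ A_n = B ⊕ C a pair of direct decompositions of an object X. If End(B) is a local ring, then there exists j ∈ {1,…,n} and a decomposition A_j = A_j' ⊕ D such that X = B ⊕ A_j' ⊕ (⊕_{i≠j} A_i). -/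
open CategoryTheory CategoryTheory.Limits

/-!
Let `π i` be the coordinate projections of `X = ⨁ A` and `p : X ⟶ B` the projection along `Co`.
Then `𝟙 B = ∑ i, (uB ≫ π i) ≫ (a i ≫ p)`, so in the local ring `End B` some summand is a unit and
`f := uB ≫ π j` is a split monomorphism. In an idempotent complete category its image splits off
`A j = A' ⊕ B`, which gives `X = B ⊕ A' ⊕ (⨁_{i ≠ j} A i)` with `B` embedded by `f ≫ a j`.
Finally `uB` and `f ≫ a j` have the same component `𝟙 B` along the projection `π j ≫ retraction f`,
so exchanging one for the other is a unipotent change of coordinates.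
-/

namespace CategoryTheory

variable {C : Type*} [Category C] [Preadditive C]

theorem exists_isSplitMono_of_sum_comp_eq_id {B : C} [IsLocalRing (End B)] {ι : Type*}
    (s : Finset ι) {Y : ι → C} (f : ∀ i, B ⟶ Y i) (g : ∀ i, Y i ⟶ B)
    (h : ∑ i ∈ s, f i ≫ g i = 𝟙 B) : ∃ i ∈ s, IsSplitMono (f i) := by
  have hsum : ∑ i ∈ s, (show End B from f i ≫ g i) = 1 := h
  obtain ⟨i, hi, u, hu⟩ := IsLocalRing.exists_of_isUnit_sum (hsum ▸ isUnit_one)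
  refine ⟨i, hi, IsSplitMono.mk' ⟨g i ≫ (↑u⁻¹ : End B), ?_⟩⟩
  have := u.inv_mul
  rw [hu, End.mul_def] at this
  exact (Category.assoc _ _ _).symm.trans this

theorem exists_isIso_biprod_desc_of_isSplitMono [IsIdempotentComplete C]
    [HasBinaryBiproducts C] {B Y : C} (f : B ⟶ Y) [IsSplitMono f] :
    ∃ (K : C) (k : K ⟶ Y), k ≫ retraction f = 0 ∧ IsIso (biprod.desc k f) := by
  obtain ⟨K, k, p, hkp, hpk⟩ := IsIdempotentComplete.idempotents_split Y
    (𝟙 Y - retraction f ≫ f) (by simp [Preadditive.sub_comp, Preadditive.comp_sub])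
  have hkr : k ≫ retraction f = 0 := by
    have : k ≫ p ≫ k = k := by rw [← Category.assoc, hkp, Category.id_comp]
    rw [← this, hpk]
    simp [Preadditive.sub_comp]
  have hfp : f ≫ p = 0 := by
    have : (p ≫ k) ≫ p = p := by rw [Category.assoc, hkp, Category.comp_id]
    rw [← this, hpk]
    simp [Preadditive.comp_sub]
  refine ⟨K, k, hkr, biprod.lift p (retraction f), ?_, ?_⟩
  · ext <;> simp [hkp, hkr, hfp]
  · rw [biprod.lift_desc, hpk, sub_add_cancel]

section Replacement

variable [HasBinaryBiproducts C]

theorem isIso_biprod_desc_of_isIso_of_comp_eq_id {B Z X : C} {g u : B ⟶ X} {h : Z ⟶ X}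
    [IsIso (biprod.desc g h)] (q : X ⟶ B) (hgq : g ≫ q = 𝟙 B) (hhq : h ≫ q = 0)
    (huq : u ≫ q = 𝟙 B) : IsIso (biprod.desc u h) := by
  set Ψ := biprod.desc g h
  -- `q` is the projection onto `B` along `h`, so `u` and `g` differ only by a map into `Z`.
  have hq : inv Ψ ≫ biprod.fst = q := by
    rw [IsIso.inv_comp_eq]
    ext <;> simp [Ψ, hgq, hhq]
  have hu : u = g + (u ≫ inv Ψ ≫ biprod.snd) ≫ h := by
    calc u = u ≫ inv Ψ ≫ Ψ := by simp
      _ = (u ≫ inv Ψ ≫ biprod.fst) ≫ g + (u ≫ inv Ψ ≫ biprod.snd) ≫ h := by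
        simp only [Ψ, biprod.desc_eq, Preadditive.comp_add, Category.assoc]
      _ = _ := by rw [hq, huq, Category.id_comp]
  have : biprod.desc u h = (Biprod.unipotentUpper (u ≫ inv Ψ ≫ biprod.snd)).hom ≫ Ψ := by
    ext
    · simp only [biprod.inl_desc, Biprod.unipotentUpper_hom, Biprod.ofComponents]
      simpa [Ψ, Preadditive.add_comp] using hu
    · simp [Ψ, Biprod.ofComponents]
  rw [this]
  infer_instance

theorem isIso_biprod_desc_comp_of_isIso {B K Y S X : C} {v : K ⟶ Y} {w : B ⟶ Y} {x : Y ⟶ X}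
    {s : S ⟶ X} [IsIso (biprod.desc v w)] [IsIso (biprod.desc x s)] :
    IsIso (biprod.desc (w ≫ x) (biprod.desc (v ≫ x) s)) := by
  have : biprod.desc (w ≫ x) (biprod.desc (v ≫ x) s) =
      ((biprod.associator B K S).symm ≪≫
        biprod.mapIso (biprod.braiding B K ≪≫ asIso (biprod.desc v w)) (Iso.refl S) ≪≫
        asIso (biprod.desc x s)).hom := by
    ext <;> simp [biprod.lift_eq, biprod.map_eq, Preadditive.add_comp, Preadditive.comp_add]
  rw [this]
  infer_instance

end Replacement

section Decomposition

variable [HasFiniteBiproducts C] {ι : Type} [Fintype ι]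

theorem isIso_biprod_desc_ι [HasBinaryBiproducts C] [DecidableEq ι] (A : ι → C) (j : ι) :
    IsIso (biprod.desc (biproduct.ι A j)
      (biproduct.desc fun i : {i // i ≠ j} => biproduct.ι A i.1)) := by
  refine ⟨biprod.lift (biproduct.π A j) (biproduct.lift fun i : {i // i ≠ j} => biproduct.π A i.1),
    ?_, ?_⟩
  · apply biprod.hom_ext'
    · apply biprod.hom_ext
      · simp
      · ext i
        simp [biproduct.ι_π_ne _ (Ne.symm i.2)]
    · ext i k
      · simp [biproduct.ι_π_ne _ i.2]
      · simp [biproduct.ι_π, Subtype.ext_iff]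
  · rw [biprod.lift_desc, biproduct.lift_desc, ← biproduct.total]
    exact (Fintype.sum_eq_add_sum_subtype_ne (fun i => biproduct.π A i ≫ biproduct.ι A i) j).symm

theorem isIso_biprod_desc_of_isIso_biproduct_desc [HasBinaryBiproducts C] [DecidableEq ι]
    {A : ι → C} {X : C} (a : ∀ i, A i ⟶ X) [IsIso (biproduct.desc a)] (j : ι) :
    IsIso (biprod.desc (a j) (biproduct.desc fun i : {i // i ≠ j} => a i.1)) := by
  have := isIso_biprod_desc_ι A j
  have : biprod.desc (a j) (biproduct.desc fun i : {i // i ≠ j} => a i.1) =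
      biprod.desc (biproduct.ι A j) (biproduct.desc fun i : {i // i ≠ j} => biproduct.ι A i.1) ≫
        biproduct.desc a := by
    ext <;> simp
  rw [this]
  infer_instance

variable {A : ι → C} {X : C} (a : ∀ i, A i ⟶ X) [IsIso (biproduct.desc a)]

theorem comp_inv_biproduct_desc (i : ι) : a i ≫ inv (biproduct.desc a) = biproduct.ι A i := by
  rw [IsIso.comp_inv_eq, biproduct.ι_desc]

theorem comp_inv_biproduct_desc_π_self (i : ι) :
    a i ≫ inv (biproduct.desc a) ≫ biproduct.π A i = 𝟙 (A i) := by
  rw [← Category.assoc, comp_inv_biproduct_desc, biproduct.ι_π_self]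

theorem comp_inv_biproduct_desc_π_of_ne [DecidableEq ι] {i k : ι} (h : i ≠ k) :
    a i ≫ inv (biproduct.desc a) ≫ biproduct.π A k = 0 := by
  rw [← Category.assoc, comp_inv_biproduct_desc, biproduct.ι_π_ne _ h]

theorem sum_inv_biproduct_desc_π_comp :
    ∑ i, (inv (biproduct.desc a) ≫ biproduct.π A i) ≫ a i = 𝟙 X := by
  calc _ = biproduct.lift (fun i => inv (biproduct.desc a) ≫ biproduct.π A i) ≫
        biproduct.desc a := biproduct.lift_desc.symm
    _ = inv (biproduct.desc a) ≫ biproduct.desc a := by congr 1; ext; simp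
    _ = 𝟙 X := IsIso.inv_hom_id _

end Decomposition

end CategoryTheory

/-- Let `X = A₁ ⊕ ⋯ ⊕ Aₙ = B ⊕ C` be two direct decompositions of `X` in an idempotent
complete additive category. If `End B` is local, then there is `j` and a decomposition
`A j = A' ⊕ D` such that `X = B ⊕ A' ⊕ (⊕_{i ≠ j} A i)`, via the given canonical
morphisms. -/
theorem stmt_8 {C : Type*} [Category C] [Preadditive C] [HasFiniteBiproducts C]
    [HasBinaryBiproducts C] [IsIdempotentComplete C]
    (X B Co : C) (n : ℕ) (A : Fin n → C) (a : ∀ i, A i ⟶ X) (uB : B ⟶ X) (uC : Co ⟶ X)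
    (hA : IsIso (biproduct.desc a)) (hBC : IsIso (biprod.desc uB uC))
    (hloc : IsLocalRing (End B)) :
    ∃ (j : Fin n) (A' D : C) (v : A' ⟶ A j) (w : D ⟶ A j),
      IsIso (biprod.desc v w) ∧
      IsIso (biprod.desc uB (biprod.desc (v ≫ a j)
        (biproduct.desc (fun i : {i : Fin n // i ≠ j} => a i.1)))) := by
  set π : ∀ i, X ⟶ A i := fun i => inv (biproduct.desc a) ≫ biproduct.π A i
  set p : X ⟶ B := inv (biprod.desc uB uC) ≫ biprod.fst
  have huBp : uB ≫ p = 𝟙 B := by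
    rw [← Category.assoc, (IsIso.comp_inv_eq _).2 (biprod.inl_desc uB uC).symm, biprod.inl_fst]
  obtain ⟨j, -, hj⟩ := exists_isSplitMono_of_sum_comp_eq_id Finset.univ (fun i => uB ≫ π i)
    (fun i => a i ≫ p) (by
      calc ∑ i, (uB ≫ π i) ≫ a i ≫ p = uB ≫ (∑ i, π i ≫ a i) ≫ p := by
            simp only [Preadditive.sum_comp, Preadditive.comp_sum, Category.assoc]
        _ = 𝟙 B := by rw [sum_inv_biproduct_desc_π_comp, Category.id_comp, huBp])
  obtain ⟨A', v, hv, hvw⟩ := exists_isIso_biprod_desc_of_isSplitMono (uB ≫ π j)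
  refine ⟨j, A', B, v, uB ≫ π j, hvw, ?_⟩
  have := isIso_biprod_desc_of_isIso_biproduct_desc a j
  have := isIso_biprod_desc_comp_of_isIso (v := v) (w := uB ≫ π j) (x := a j)
    (s := biproduct.desc fun i : {i // i ≠ j} => a i.1)
  have hπj : a j ≫ π j = 𝟙 (A j) := comp_inv_biproduct_desc_π_self a j
  refine isIso_biprod_desc_of_isIso_of_comp_eq_id (g := (uB ≫ π j) ≫ a j) (π j ≫ retraction (uB ≫ π j))
    ?_ ?_ ((Category.assoc _ _ _).symm.trans (IsSplitMono.id _))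
  · rw [Category.assoc, ← Category.assoc (a j), hπj, Category.id_comp, IsSplitMono.id]
  · ext i
    · rw [biprod.inl_desc_assoc, Category.assoc, ← Category.assoc (a j), hπj,
        Category.id_comp, hv, comp_zero]
    · rw [biprod.inr_desc_assoc, biproduct.ι_desc_assoc, ← Category.assoc,
        comp_inv_biproduct_desc_π_of_ne a i.2, zero_comp, comp_zero, comp_zero]
end

section
/- In any additive category, a finite direct sum of objects with the finite exchange property has the finite exchange property. -/
/-!
By induction on the number of summands (peeling off the first one) it suffices to treat
`X ⊞ Y`. Let `u : X ⊞ Y ⟶ ⨁ B` be split mono. Exchange for `X` gives `⨁ B ≅ X ⊞ ⨁ C₁` with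
`B i ≅ C₁ i ⊞ D₁ i`. The component of `Y` in `⨁ C₁` is again split mono, so exchange for `Y`
gives `⨁ C₁ ≅ Y ⊞ ⨁ C₂` with `C₁ i ≅ C₂ i ⊞ D₂ i`. Then `B i ≅ C₂ i ⊞ (D₂ i ⊞ D₁ i)`, and
`u` together with `⨁ C₂` exhausts `⨁ B`: the comparison map differs from the composite of the
two exchange isomorphisms only by a unipotent shear, which accounts for the `X`-component of `Y`.
-/

open CategoryTheory CategoryTheory.Limits

section Biprod

variable {C : Type*} [Category C] [Preadditive C] [HasBinaryBiproducts C]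

lemma eq_comp_fst_add_comp_snd_of_isIso_desc {X P B Z : C} (a : X ⟶ B) (j : P ⟶ B)
    [IsIso (biprod.desc a j)] (f : Z ⟶ B) :
    f = f ≫ inv (biprod.desc a j) ≫ biprod.fst ≫ a
      + f ≫ inv (biprod.desc a j) ≫ biprod.snd ≫ j :=
  calc f = f ≫ inv (biprod.desc a j) ≫ (biprod.fst ≫ biprod.inl + biprod.snd ≫ biprod.inr) ≫
        biprod.desc a j := by rw [biprod.total]; simp
    _ = _ := by
      simp only [Preadditive.add_comp, Preadditive.comp_add, Category.assoc, biprod.inl_desc,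
        biprod.inr_desc]

lemma isSplitMono_inr_comp_inv_desc_snd {X Y P B : C} (u : X ⊞ Y ⟶ B) [IsSplitMono u]
    (j : P ⟶ B) [IsIso (biprod.desc (biprod.inl ≫ u) j)] :
    IsSplitMono (biprod.inr ≫ u ≫ inv (biprod.desc (biprod.inl ≫ u) j) ≫ biprod.snd) := by
  refine ⟨⟨⟨j ≫ retraction u ≫ biprod.snd, ?_⟩⟩⟩
  have hdecomp := eq_comp_fst_add_comp_snd_of_isIso_desc (biprod.inl ≫ u) j (biprod.inr ≫ u)
  simp only [Category.assoc] at hdecomp ⊢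
  rw [reassoc_of% (eq_sub_of_add_eq' hdecomp.symm)]
  simp

lemma isIso_desc_comp_of_isIso_desc {X Y P Q B : C} (u : X ⊞ Y ⟶ B) (j : P ⟶ B) (k : Q ⟶ P)
    [IsIso (biprod.desc (biprod.inl ≫ u) j)]
    [IsIso (biprod.desc (biprod.inr ≫ u ≫ inv (biprod.desc (biprod.inl ≫ u) j) ≫ biprod.snd) k)] :
    IsIso (biprod.desc u (k ≫ j)) := by
  set e := biprod.desc (biprod.inl ≫ u) j
  set e' := biprod.desc (biprod.inr ≫ u ≫ inv e ≫ biprod.snd) k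
  have hfactor : biprod.desc u (k ≫ j) = (biprod.associator X Y Q).hom ≫
      (Biprod.unipotentLower (biprod.fst ≫ biprod.inr ≫ u ≫ inv e ≫ biprod.fst)).hom ≫
      (biprod.mapIso (Iso.refl X) (asIso e')).hom ≫ e := by
    ext
    · simp [e, e', biprod.lift_eq, biprod.map_eq, Biprod.ofComponents]
    · simpa [e, e', biprod.lift_eq, biprod.map_eq, Biprod.ofComponents, add_comm] using
        eq_comp_fst_add_comp_snd_of_isIso_desc (biprod.inl ≫ u) j (biprod.inr ≫ u)
    · simp [e, e', biprod.lift_eq, biprod.map_eq, Biprod.ofComponents]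
  rw [hfactor]
  infer_instance

lemma isIso_desc_comp_desc_of_isIso_desc {C₁ D₁ C₂ D₂ B : C} (v₁ : C₁ ⟶ B) (w₁ : D₁ ⟶ B)
    (v₂ : C₂ ⟶ C₁) (w₂ : D₂ ⟶ C₁) [IsIso (biprod.desc v₁ w₁)] [IsIso (biprod.desc v₂ w₂)] :
    IsIso (biprod.desc (v₂ ≫ v₁) (biprod.desc (w₂ ≫ v₁) w₁)) := by
  have hfactor : biprod.desc (v₂ ≫ v₁) (biprod.desc (w₂ ≫ v₁) w₁) =
      (biprod.associator C₂ D₂ D₁).inv ≫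
        (biprod.mapIso (asIso (biprod.desc v₂ w₂)) (Iso.refl D₁)).hom ≫ biprod.desc v₁ w₁ := by
    ext <;> simp [biprod.lift_eq, biprod.map_eq]
  rw [hfactor]
  infer_instance

end Biprod

section FinExchange

variable {C : Type*} [Category C] [Preadditive C] [HasFiniteBiproducts C] [HasBinaryBiproducts C]

noncomputable def biproductFinSuccIso {n : ℕ} (A : Fin (n + 1) → C) :
    ⨁ A ≅ A 0 ⊞ ⨁ fun i : Fin n => A i.succ where
  hom := biprod.lift (biproduct.π A 0) (biproduct.lift fun i => biproduct.π A i.succ)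
  inv := biprod.desc (biproduct.ι A 0) (biproduct.desc fun i => biproduct.ι A i.succ)
  hom_inv_id := by
    rw [biprod.lift_desc, biproduct.lift_desc, ← biproduct.total, Fin.sum_univ_succ]
  inv_hom_id := by
    ext <;> simp [biproduct.ι_π, Fin.succ_ne_zero, (Fin.succ_ne_zero _).symm, Fin.succ_inj]

theorem FinExchange.of_isZero {Z : C} (hZ : IsZero Z) : FinExchange Z := by
  intro n B u _
  refine ⟨B, fun _ => Z, fun _ => 𝟙 _, fun _ => 0, fun i => ?_, ?_⟩
  · rw [show biprod.desc (𝟙 (B i)) 0 = (isoBiprodZero hZ).inv by simp [biprod.desc_eq]]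
    infer_instance
  · have hdesc : (biproduct.desc fun i => 𝟙 (B i) ≫ biproduct.ι B i) = 𝟙 (⨁ B) := by
      ext; simp
    rw [hdesc, hZ.eq_of_src u 0,
      show biprod.desc 0 (𝟙 (⨁ B)) = (isoZeroBiprod hZ).inv by simp [biprod.desc_eq]]
    infer_instance

theorem FinExchange.of_iso {A A' : C} (e : A' ≅ A) (h : FinExchange A) : FinExchange A' := by
  intro n B u hu
  obtain ⟨Cc, Dd, v, w, hvw, hiso⟩ := h n B (e.inv ≫ u) inferInstance
  refine ⟨Cc, Dd, v, w, hvw, ?_⟩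
  have hfactor : biprod.desc u (biproduct.desc fun i => v i ≫ biproduct.ι B i) =
      (biprod.mapIso e (Iso.refl _)).hom ≫
        biprod.desc (e.inv ≫ u) (biproduct.desc fun i => v i ≫ biproduct.ι B i) := by
    ext <;> simp [biprod.map_eq]
  rw [hfactor]
  infer_instance

theorem FinExchange.biprod {X Y : C} (hX : FinExchange X) (hY : FinExchange Y) :
    FinExchange (X ⊞ Y) := by
  intro n B u hu
  obtain ⟨C₁, D₁, v₁, w₁, hvw₁, he₁⟩ := hX n B (biprod.inl ≫ u) inferInstance
  set j₁ := biproduct.desc fun i => v₁ i ≫ biproduct.ι B i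
  obtain ⟨C₂, D₂, v₂, w₂, hvw₂, he₂⟩ := hY n C₁ _ (isSplitMono_inr_comp_inv_desc_snd u j₁)
  refine ⟨C₂, fun i => D₂ i ⊞ D₁ i, fun i => v₂ i ≫ v₁ i,
    fun i => biprod.desc (w₂ i ≫ v₁ i) (w₁ i),
    fun i => isIso_desc_comp_desc_of_isIso_desc .., ?_⟩
  have hcomp : (biproduct.desc fun i => (v₂ i ≫ v₁ i) ≫ biproduct.ι B i) =
      (biproduct.desc fun i => v₂ i ≫ biproduct.ι C₁ i) ≫ j₁ := by
    ext; simp [j₁]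
  rw [hcomp]
  exact isIso_desc_comp_of_isIso_desc ..

end FinExchange

/-- In any additive category, a finite direct sum of objects with the finite exchange
property has the finite exchange property. -/
theorem stmt_9 {C : Type*} [Category C] [Preadditive C] [HasFiniteBiproducts C]
    [HasBinaryBiproducts C] (n : ℕ) (A : Fin n → C) (h : ∀ i, FinExchange (A i)) :
    FinExchange (⨁ A) := by
  induction n with
  | zero =>
    exact FinExchange.of_isZero <|
      (IsZero.iff_id_eq_zero _).2 (biproduct.hom_ext _ _ fun j => j.elim0)
  | succ m ih =>
    exact ((h 0).biprod (ih _ fun i => h i.succ)).of_iso (biproductFinSuccIso A)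
end

section
/- Let C be an idempotent complete additive category and X = A₁ ⊕ ⋯ ⊕ A_n = B ⊕ C, where B is indecomposable and each End(A_i) is local. Then there exists j ∈ {1,…,n} such that X = B ⊕ (⊕_{i≠j} A_i); in particular B ≅ A_j. -/
open CategoryTheory CategoryTheory.Limits

/-!
Write `X ≅ ⨁ A` and let `u : B ⟶ ⨁ A`, `p : ⨁ A ⟶ B` be the inclusion and projection of the
summand `B`. For an index `i₀`, the endomorphisms `α = ι i₀ ≫ p ≫ u ≫ π i₀` and `1 - α` of the
local ring `End (A i₀)` are not both non-units. If `α` is a unit, `u ≫ π i₀` is a split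
epimorphism from the indecomposable `B` onto the nonzero `A i₀`, hence an isomorphism. If `1 - α`
is a unit, `B` has a retraction vanishing on `A i₀`, so `B` is a direct summand of
`⨁_{i ≠ i₀} A i` and induction on the number of summands applies. Once `u ≫ π j` is invertible,
`B` replaces `A j`: the matrix of `B ⊞ ⨁_{i ≠ j} A i ⟶ A j ⊞ ⨁_{i ≠ j} A i` is upper triangular
with invertible diagonal.
-/

namespace CategoryTheory

variable {C : Type*} [Category C] [Preadditive C]

theorem exists_retraction_comp_eq_zero {X A B : C} (u : B ⟶ X) (p : X ⟶ B) (hup : u ≫ p = 𝟙 B)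
    (a : A ⟶ X) (q : X ⟶ A) [IsIso (a ≫ (𝟙 X - p ≫ u) ≫ q)] :
    ∃ θ : X ⟶ B, u ≫ θ = 𝟙 B ∧ a ≫ θ = 0 := by
  -- the projection onto `B` along `a` and the part of the complement of `B` that `q` kills
  refine ⟨p - (𝟙 X - p ≫ u) ≫ q ≫ inv (a ≫ (𝟙 X - p ≫ u) ≫ q) ≫ a ≫ p, ?_, ?_⟩
  · simp [reassoc_of% hup, hup]
  · rw [Preadditive.comp_sub, ← Category.assoc a, ← Category.assoc (a ≫ _),
      Category.assoc a, IsIso.hom_inv_id_assoc, sub_self]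

namespace Limits

theorem Biprod.isIso_ofComponents_of_zero [HasBinaryBiproducts C] {X₁ X₂ Y₁ Y₂ : C}
    (f₁₁ : X₁ ⟶ Y₁) (f₁₂ : X₁ ⟶ Y₂) (f₂₂ : X₂ ⟶ Y₂) [IsIso f₁₁] [IsIso f₂₂] :
    IsIso (Biprod.ofComponents f₁₁ f₁₂ 0 f₂₂) :=
  ⟨Biprod.ofComponents (inv f₁₁) (-(inv f₁₁ ≫ f₁₂ ≫ inv f₂₂)) 0 (inv f₂₂), by
    ext <;> simp, by ext <;> simp⟩

section SubtypeNe

variable [HasFiniteBiproducts C] {ι : Type} [Fintype ι] [DecidableEq ι] (A : ι → C) (j : ι)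

theorem biproduct.π_ι_add_lift_desc_ne :
    biproduct.π A j ≫ biproduct.ι A j +
      (biproduct.lift fun i : {i // i ≠ j} => biproduct.π A i) ≫
        (biproduct.desc fun i : {i // i ≠ j} => biproduct.ι A i) = 𝟙 (⨁ A) := by
  rw [biproduct.lift_desc, ← biproduct.total, Fintype.sum_eq_add_sum_subtype_ne _ j]

@[simps]
noncomputable def biproduct.isoBiprodSubtypeNe [HasBinaryBiproducts C] :
    ⨁ A ≅ A j ⊞ ⨁ fun i : {i // i ≠ j} => A i where
  hom := biprod.lift (biproduct.π A j) (biproduct.lift fun i => biproduct.π A i)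
  inv := biprod.desc (biproduct.ι A j) (biproduct.desc fun i => biproduct.ι A i)
  hom_inv_id := by rw [biprod.lift_desc, biproduct.π_ι_add_lift_desc_ne]
  inv_hom_id := by
    apply biprod.hom_ext' <;> apply biprod.hom_ext
    · simp
    · ext i
      simp [biproduct.ι_π_ne _ (Ne.symm i.2)]
    · ext i
      simp [biproduct.ι_π_ne _ i.2]
    · ext i k
      by_cases h : k = i
      · subst h
        simp
      · simp [biproduct.ι_π_ne _ h, biproduct.ι_π_ne _ (Subtype.coe_ne_coe.2 h)]

end SubtypeNe

theorem exists_isIso_biprod_lift_of_comp_eq_id [HasBinaryBiproducts C] [IsIdempotentComplete C]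
    {A B : C} (f : B ⟶ A) (g : A ⟶ B) (hgf : g ≫ f = 𝟙 A) :
    ∃ (K : C) (e : B ⟶ K) (i : K ⟶ B), IsIso (biprod.lift f e) ∧ e ≫ i = 𝟙 B - f ≫ g := by
  obtain ⟨K, i, e, hie, hei⟩ := IsIdempotentComplete.idempotents_split B (𝟙 B - f ≫ g)
    (by simp [reassoc_of% hgf])
  have hge : g ≫ e = 0 := by
    have : g ≫ e = g ≫ (e ≫ i) ≫ e := by simp [hie]
    rw [this, hei]
    simp [reassoc_of% hgf]
  have hif : i ≫ f = 0 := by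
    have : i ≫ f = i ≫ (e ≫ i) ≫ f := by simp [reassoc_of% hie]
    rw [this, hei]
    simp [hgf]
  refine ⟨K, e, i, ⟨biprod.desc g i, ?_, ?_⟩, hei⟩
  · rw [biprod.lift_desc, hei, add_sub_cancel]
  · ext <;> simp [hgf, hge, hif, hie]

theorem isIso_biprod_desc_biproduct_desc_ne [HasFiniteBiproducts C] [HasBinaryBiproducts C]
    {ι : Type} [Fintype ι] [DecidableEq ι] {A : ι → C} {B : C} (w : B ⟶ ⨁ A) (j : ι)
    [IsIso (w ≫ biproduct.π A j)] :
    IsIso (biprod.desc w (biproduct.desc fun i : {i // i ≠ j} => biproduct.ι A i)) := by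
  have hinr : (biproduct.desc fun i : {i // i ≠ j} => biproduct.ι A i) ≫
      (biproduct.isoBiprodSubtypeNe A j).hom = biprod.inr := by
    simpa using biprod.inr ≫= (biproduct.isoBiprodSubtypeNe A j).inv_hom_id
  have hfac : biprod.desc w (biproduct.desc fun i : {i // i ≠ j} => biproduct.ι A i) ≫
      (biproduct.isoBiprodSubtypeNe A j).hom =
      Biprod.ofComponents (w ≫ biproduct.π A j)
        (w ≫ biproduct.lift fun i : {i // i ≠ j} => biproduct.π A i) 0
        (𝟙 (⨁ fun i : {i // i ≠ j} => A i)) := by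
    apply biprod.hom_ext'
    · apply biprod.hom_ext <;> simp
    · simpa using hinr
  have := Biprod.isIso_ofComponents_of_zero (w ≫ biproduct.π A j)
    (w ≫ biproduct.lift fun i : {i // i ≠ j} => biproduct.π A i)
    (𝟙 (⨁ fun i : {i // i ≠ j} => A i))
  exact IsIso.of_isIso_fac_right hfac

end Limits

end CategoryTheory

namespace IndecomposableObj

variable {C : Type*} [Category C] [Preadditive C] [HasBinaryBiproducts C]
  [IsIdempotentComplete C]

theorem isIso_of_comp_eq_id {A B : C} (hB : IndecomposableObj B) (f : B ⟶ A)
    (g : A ⟶ B) (hgf : g ≫ f = 𝟙 A) (hA : ¬ IsZero A) : IsIso f := by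
  obtain ⟨K, e, i, hfe, hei⟩ := exists_isIso_biprod_lift_of_comp_eq_id f g hgf
  refine (hB.2 A K ⟨asIso (biprod.lift f e)⟩).elim (absurd · hA) fun hK => ⟨g, ?_, hgf⟩
  exact (sub_eq_zero.mp (by rw [← hei, hK.eq_of_src i 0, comp_zero])).symm

theorem exists_isIso_comp_biproduct_π [HasFiniteBiproducts C] {ι : Type} [Fintype ι]
    [DecidableEq ι] {A : ι → C} (hA : ∀ i, IsLocalRing (End (A i))) {B : C}
    (hB : IndecomposableObj B) (u : B ⟶ ⨁ A) (p : ⨁ A ⟶ B) (hup : u ≫ p = 𝟙 B) :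
    ∃ j, IsIso (u ≫ biproduct.π A j) := by
  induction hn : Fintype.card ι using Nat.strong_induction_on generalizing ι with
  | _ n ih =>
    rcases isEmpty_or_nonempty ι with hι | ⟨⟨i₀⟩⟩
    · have hzero : IsZero (⨁ A) :=
        (IsZero.iff_id_eq_zero _).2 (biproduct.hom_ext' _ _ fun i => isEmptyElim i)
      refine absurd ((IsZero.iff_id_eq_zero B).2 ?_) hB.1
      rw [← hup, hzero.eq_of_tgt u 0, zero_comp]
    have := hA i₀
    let α : End (A i₀) := biproduct.ι A i₀ ≫ p ≫ u ≫ biproduct.π A i₀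
    rcases IsLocalRing.isUnit_or_isUnit_of_add_one (add_sub_cancel α 1) with hα | hβ
    · rw [isUnit_iff_isIso] at hα
      refine ⟨i₀, hB.isIso_of_comp_eq_id _ (inv α ≫ biproduct.ι A i₀ ≫ p) ?_ ?_⟩
      · simp only [Category.assoc]
        exact IsIso.inv_hom_id α
      · exact fun h => one_ne_zero (α := End (A i₀)) (h.eq_of_src _ _)
    · have : IsIso (biproduct.ι A i₀ ≫ (𝟙 _ - p ≫ u) ≫ biproduct.π A i₀) := by
        convert (isUnit_iff_isIso _).1 hβ using 1
        simp [α, End.one_def]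
      obtain ⟨θ, huθ, hιθ⟩ := exists_retraction_comp_eq_zero u p hup
        (biproduct.ι A i₀) (biproduct.π A i₀)
      have hcompl := eq_sub_of_add_eq' (biproduct.π_ι_add_lift_desc_ne A i₀)
      have hlt : Fintype.card {i // i ≠ i₀} < n := hn ▸ Fintype.card_subtype_lt (not_not.2 rfl)
      obtain ⟨j, hj⟩ := ih _ hlt (A := fun i : {i // i ≠ i₀} => A i) (fun i => hA i)
        (u ≫ biproduct.lift fun i => biproduct.π A i)
        ((biproduct.desc fun i => biproduct.ι A i) ≫ θ)
        (by simp [reassoc_of% hcompl, huθ, hιθ]) rfl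
      exact ⟨j, by simpa using hj⟩

end IndecomposableObj

/-- Let `X = A₁ ⊕ ⋯ ⊕ Aₙ = B ⊕ C` in an idempotent complete additive category, with `B`
indecomposable and each `End (A i)` local. Then there is `j` such that
`X = B ⊕ (⊕_{i ≠ j} A i)` via the given canonical morphisms; in particular `B ≅ A j`. -/
theorem stmt_11 {C : Type*} [Category C] [Preadditive C] [HasFiniteBiproducts C]
    [HasBinaryBiproducts C] [IsIdempotentComplete C]
    (X B Co : C) (n : ℕ) (A : Fin n → C) (a : ∀ i, A i ⟶ X) (uB : B ⟶ X) (uC : Co ⟶ X)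
    (hA : IsIso (biproduct.desc a)) (hBC : IsIso (biprod.desc uB uC))
    (hB : IndecomposableObj B) (hloc : ∀ i, IsLocalRing (End (A i))) :
    ∃ j : Fin n,
      IsIso (biprod.desc uB (biproduct.desc (fun i : {i : Fin n // i ≠ j} => a i.1))) ∧
      Nonempty (B ≅ A j) := by
  have hretr : uB ≫ inv (biprod.desc uB uC) ≫ biprod.fst = 𝟙 B := by
    simpa only [biprod.inl_desc_assoc, Category.id_comp, biprod.inl_fst] using
      biprod.inl ≫= IsIso.hom_inv_id_assoc (biprod.desc uB uC) biprod.fst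
  obtain ⟨j, hj⟩ := hB.exists_isIso_comp_biproduct_π hloc (uB ≫ inv (biproduct.desc a))
    (biproduct.desc a ≫ inv (biprod.desc uB uC) ≫ biprod.fst) (by simp [hretr])
  refine ⟨j, ?_, ⟨asIso ((uB ≫ inv (biproduct.desc a)) ≫ biproduct.π A j)⟩⟩
  have hfac : biprod.desc uB (biproduct.desc fun i : {i // i ≠ j} => a i) =
      biprod.desc (uB ≫ inv (biproduct.desc a))
        (biproduct.desc fun i : {i // i ≠ j} => biproduct.ι A i) ≫ biproduct.desc a := by
    ext <;> simp
  rw [hfac]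
  have := isIso_biprod_desc_biproduct_desc_ne (uB ≫ inv (biproduct.desc a)) j
  infer_instance
end

section
/- Let C be an idempotent complete additive category (with arbitrary direct sums) with enough compact objects. For any object B, any direct decomposition X = ⊕_{i∈I} A_i, and any split monomorphism u : B → X with B ≠ 0, there exists a finite subset J ⊆ I such that the induced morphism (u, u_J) : B ⊕ X(J) → X is not a split monomorphism, where X(J) = ⊕_{j∈J} A_j and u_J is the canonical inclusion. -/
/-!
If `(u, u_J)` had a retraction `r`, then `r ≫ fst` would be a retraction of `u` killing the
summand `X(J)`. A nonzero `f : K ⟶ B` from a compact object has `f ≫ u` factoring through some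
finite `X(J)`, so applying `r ≫ fst` to `f ≫ u` gives both `f` and `0`.
-/

open CategoryTheory CategoryTheory.Limits

universe w v u

variable {C : Type u} [Category.{v} C] [Preadditive C] [HasBinaryBiproducts C]
  [HasCoproducts.{w} C]

/-- An object `K` is compact if every morphism from `K` into a direct sum factors through
the inclusion of a finite subsum. -/
def IsCompactObj (K : C) : Prop :=
  ∀ {ι : Type w} (A : ι → C) (f : K ⟶ ∐ A),
    ∃ (J : Finset ι) (g : K ⟶ ∐ (fun j : J => A j.1)),
      f = g ≫ Sigma.desc (fun j : J => Sigma.ι A j.1)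

/-- `C` has enough compact objects: every nonzero object receives a nonzero morphism from
some compact object. -/
def EnoughCompacts : Prop :=
  ∀ B : C, ¬ IsZero B → ∃ (K : C) (f : K ⟶ B), IsCompactObj K ∧ f ≠ 0

section SplitMonoBiprodDesc

variable {D : Type*} [Category D] [HasZeroMorphisms D] {X Y Z : D} [HasBinaryBiproduct X Y]
  (a : X ⟶ Z) (b : Y ⟶ Z)

theorem exists_retraction_comp_eq_zero_of_isSplitMono_biprod_desc
    [IsSplitMono (biprod.desc a b)] : ∃ r : Z ⟶ X, a ≫ r = 𝟙 X ∧ b ≫ r = 0 := by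
  refine ⟨retraction (biprod.desc a b) ≫ biprod.fst, ?_, ?_⟩
  · nth_rw 1 [← biprod.inl_desc a b]
    rw [Category.assoc, IsSplitMono.id_assoc, biprod.inl_fst]
  · nth_rw 1 [← biprod.inr_desc a b]
    rw [Category.assoc, IsSplitMono.id_assoc, biprod.inr_fst]

theorem eq_zero_of_comp_eq_comp_of_isSplitMono_biprod_desc [IsSplitMono (biprod.desc a b)]
    {K : D} (f : K ⟶ X) (g : K ⟶ Y) (h : f ≫ a = g ≫ b) : f = 0 := by
  obtain ⟨r, har, hbr⟩ := exists_retraction_comp_eq_zero_of_isSplitMono_biprod_desc a b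
  calc f = f ≫ a ≫ r := by rw [har, Category.comp_id]
    _ = g ≫ b ≫ r := by rw [← Category.assoc, h, Category.assoc]
    _ = 0 := by rw [hbr, comp_zero]

end SplitMonoBiprodDesc

theorem stmt_12_general (hC : EnoughCompacts (C := C))
    (B : C) {ι : Type w} (A : ι → C) (u : B ⟶ ∐ A)
    (hB : ¬ IsZero B) :
    ∃ J : Finset ι,
      ¬ IsSplitMono (biprod.desc u (Sigma.desc (fun j : J => Sigma.ι A j.1))) := by
  obtain ⟨K, f, hK, hf⟩ := hC B hB
  obtain ⟨J, g, hfu⟩ := hK A (f ≫ u)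
  exact ⟨J, fun _ => hf (eq_zero_of_comp_eq_comp_of_isSplitMono_biprod_desc _ _ f g hfu)⟩

/-- In an idempotent complete additive category with direct sums and enough compact
objects, for every nonzero `B`, every decomposition `X = ⊕_{i ∈ I} A i`, and every split
monomorphism `u : B ⟶ X`, there is a finite `J ⊆ I` such that
`(u, u_J) : B ⊕ X(J) ⟶ X` is not a split monomorphism. -/
theorem stmt_12 [IsIdempotentComplete C] (hC : EnoughCompacts (C := C))
    (B : C) {ι : Type w} (A : ι → C) (u : B ⟶ ∐ A) (hu : IsSplitMono u)
    (hB : ¬ IsZero B) :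
    ∃ J : Finset ι,
      ¬ IsSplitMono (biprod.desc u (Sigma.desc (fun j : J => Sigma.ι A j.1))) :=
  stmt_12_general hC B A u hB
end

section
/- Let X = M ⊕ N = K ⊕ L be two direct decompositions of an object X in an additive category, with canonical inclusions u_M : M → X and u_K : K → X, such that M is indecomposable with local endomorphism ring and (u_M, u_K) : M ⊕ K → X is not a split monomorphism. Then (u_M, u_L) : M ⊕ L → X is a split monomorphism. -/
/-!
Let `r : X ⟶ M` be the retraction of `u_M` given by `X = M ⊕ N`, and `π_K`, `π_L` the projections
of `X = K ⊕ L`. Then `𝟙 M = (u_M ≫ π_K) ≫ (u_K ≫ r) + (u_M ≫ π_L) ≫ (u_L ≫ r)`, so, `End M`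
being local, `u_M ≫ π_K` or `u_M ≫ π_L` is a split monomorphism. If `u_M ≫ π_K` is split mono,
then `M` can replace `K` in `X = K ⊕ L`, so `(u_M, u_L)` is split mono; symmetrically, if
`u_M ≫ π_L` is split mono then so is `(u_M, u_K)`, which is excluded.
-/

open CategoryTheory CategoryTheory.Limits

namespace CategoryTheory

variable {C : Type*} [Category C]

theorem isSplitMono_of_isIso_comp {X Y Z : C} (f : X ⟶ Y) (g : Y ⟶ Z) [IsIso (f ≫ g)] :
    IsSplitMono f :=
  IsSplitMono.mk' ⟨g ≫ inv (f ≫ g), by rw [← Category.assoc, IsIso.hom_inv_id]⟩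

section Preadditive

variable [Preadditive C]

theorem isSplitMono_or_isSplitMono_of_comp_add_comp_eq_id {M Y Z : C} [IsLocalRing (End M)]
    (f₁ : M ⟶ Y) (g₁ : Y ⟶ M) (f₂ : M ⟶ Z) (g₂ : Z ⟶ M) (h : f₁ ≫ g₁ + f₂ ≫ g₂ = 𝟙 M) :
    IsSplitMono f₁ ∨ IsSplitMono f₂ := by
  refine (IsLocalRing.isUnit_or_isUnit_of_add_one (R := End M) (a := f₁ ≫ g₁) (b := f₂ ≫ g₂)
    h).imp (fun hu => ?_) (fun hu => ?_)
  · have := (isUnit_iff_isIso _).mp hu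
    exact isSplitMono_of_isIso_comp f₁ g₁
  · have := (isUnit_iff_isIso _).mp hu
    exact isSplitMono_of_isIso_comp f₂ g₂

variable [HasBinaryBiproducts C]

/-- Gaussian elimination: the retraction is `(p ≫ ρ, s - p ≫ ρ ≫ f ≫ s)` with `ρ` a retraction
of `f ≫ p`. -/
theorem isSplitMono_biprod_desc_of_isSplitMono_comp {M L X K : C} (f : M ⟶ X) (g : L ⟶ X)
    (p : X ⟶ K) (s : X ⟶ L) [IsSplitMono (f ≫ p)] (hgs : g ≫ s = 𝟙 L) (hgp : g ≫ p = 0) :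
    IsSplitMono (biprod.desc f g) := by
  set ρ := retraction (f ≫ p)
  have hfρ : f ≫ p ≫ ρ = 𝟙 M := by rw [← Category.assoc]; exact IsSplitMono.id _
  refine IsSplitMono.mk' ⟨biprod.lift (p ≫ ρ) (s - p ≫ ρ ≫ f ≫ s), ?_⟩
  ext <;> simp [hfρ, reassoc_of% hfρ, reassoc_of% hgp, hgs]

section Decomposition

variable {X K L : C} (uK : K ⟶ X) (uL : L ⟶ X) [IsIso (biprod.desc uK uL)]

theorem comp_inv_biprod_desc_eq_inl : uK ≫ inv (biprod.desc uK uL) = biprod.inl := by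
  simp [IsIso.comp_inv_eq]

theorem comp_inv_biprod_desc_eq_inr : uL ≫ inv (biprod.desc uK uL) = biprod.inr := by
  simp [IsIso.comp_inv_eq]

theorem inv_biprod_desc_total :
    (inv (biprod.desc uK uL) ≫ biprod.fst) ≫ uK + (inv (biprod.desc uK uL) ≫ biprod.snd) ≫ uL =
      𝟙 X := by
  simp only [Category.assoc, ← Preadditive.comp_add, ← biprod.desc_eq, IsIso.inv_hom_id]

end Decomposition

end Preadditive

end CategoryTheory

theorem stmt_13_general {C : Type*} [Category C] [Preadditive C] [HasBinaryBiproducts C]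
    (X M N K L : C)
    (uM : M ⟶ X) (uN : N ⟶ X) (uK : K ⟶ X) (uL : L ⟶ X)
    (hMN : IsIso (biprod.desc uM uN)) (hKL : IsIso (biprod.desc uK uL))
    (hloc : IsLocalRing (End M))
    (h : ¬ IsSplitMono (biprod.desc uM uK)) :
    IsSplitMono (biprod.desc uM uL) := by
  set r := inv (biprod.desc uM uN) ≫ biprod.fst
  set πK := inv (biprod.desc uK uL) ≫ biprod.fst
  set πL := inv (biprod.desc uK uL) ≫ biprod.snd
  have hsum : (uM ≫ πK) ≫ (uK ≫ r) + (uM ≫ πL) ≫ (uL ≫ r) = 𝟙 M :=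
    calc (uM ≫ πK) ≫ (uK ≫ r) + (uM ≫ πL) ≫ (uL ≫ r)
        = uM ≫ (πK ≫ uK + πL ≫ uL) ≫ r := by
          simp only [Preadditive.add_comp, Preadditive.comp_add, Category.assoc]
      _ = uM ≫ r := by rw [inv_biprod_desc_total, Category.id_comp]
      _ = 𝟙 M := by simp [r, reassoc_of% comp_inv_biprod_desc_eq_inl uM uN]
  have hKinv := reassoc_of% comp_inv_biprod_desc_eq_inl uK uL
  have hLinv := reassoc_of% comp_inv_biprod_desc_eq_inr uK uL
  obtain hK | hL := isSplitMono_or_isSplitMono_of_comp_add_comp_eq_id _ _ _ _ hsum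
  · exact isSplitMono_biprod_desc_of_isSplitMono_comp uM uL πK πL (by simp [πL, hLinv])
      (by simp [πK, hLinv])
  · exact (h (isSplitMono_biprod_desc_of_isSplitMono_comp uM uK πL πK
      (by simp [πK, hKinv]) (by simp [πL, hKinv]))).elim

/-- Let `X = M ⊕ N = K ⊕ L` be two direct decompositions of `X` in an idempotent complete
additive category, with `M` indecomposable with local endomorphism ring. If
`(u_M, u_K) : M ⊕ K ⟶ X` is not a split monomorphism, then `(u_M, u_L) : M ⊕ L ⟶ X` is a
split monomorphism. -/
theorem stmt_13 {C : Type*} [Category C] [Preadditive C] [HasBinaryBiproducts C]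
    [IsIdempotentComplete C] (X M N K L : C)
    (uM : M ⟶ X) (uN : N ⟶ X) (uK : K ⟶ X) (uL : L ⟶ X)
    (hMN : IsIso (biprod.desc uM uN)) (hKL : IsIso (biprod.desc uK uL))
    (hM : IndecomposableObj M) (hloc : IsLocalRing (End M))
    (h : ¬ IsSplitMono (biprod.desc uM uK)) :
    IsSplitMono (biprod.desc uM uL) :=
  stmt_13_general X M N K L uM uN uK uL hMN hKL hloc h
end

section
/- The group of p-adic integers Ẑ_p, embedded diagonally as {(a_n + p^nℤ)_n : a_{n+1} ≡ a_n mod p^n}, is a pure subgroup of the direct product ∏_{n>0} ℤ/p^nℤ; consequently, since Ẑ_p is pure-injective, the inclusion Ẑ_p → ∏_{n>0} ℤ/p^nℤ splits, i.e., there exists a group homomorphism u : ∏_{n>0} ℤ/p^nℤ → Ẑ_p restricting to the identity on Ẑ_p. -/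
/-!
Purity is a consequence of the splitting, as for any direct summand: if `u` retracts the
diagonal embedding and `padicDiag x = k • y`, then `x = u (padicDiag x) = k • u y`.

For the splitting, lift each residue `y n ∈ ℤ/p^(n+1)ℤ` to `ℤ_[p]` and take the limit of the
lifts along a non-principal ultrafilter on `ℕ`; the limit exists as `ℤ_[p]` is compact. The
lifts are not additive, but their defect at `n` lies in `p^(n+1) ℤ_[p]`, so it tends to `0` and
is invisible to the ultralimit; on the image of `ℤ_[p]` the lifts converge to `x` itself.
-/

open Padic

variable (p : ℕ) [Fact p.Prime]

/-- The diagonal embedding of the `p`-adic integers into `∏_{n > 0} ℤ/pⁿℤ`, sending `x`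
to its family of residues mod `p^(n+1)`. -/
noncomputable def padicDiag : ℤ_[p] →+ ∀ n : ℕ, ZMod (p ^ (n + 1)) :=
  AddMonoidHom.mk' (fun x n => PadicInt.toZModPow (n + 1) x)
    (fun a b => by funext n; exact map_add _ a b)

open Filter Topology

namespace Ultrafilter

variable {ι G : Type*} [TopologicalSpace G] [AddGroup G] [ContinuousAdd G] [CompactSpace G]
  [T2Space G] (U : Ultrafilter ι)

noncomputable def limAddHom : (ι → G) →+ G :=
  AddMonoidHom.mk' (fun f => (U.map f).lim) fun f g => by
    rw [lim_eq_iff_le_nhds]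
    exact Tendsto.add (U.map f).le_nhds_lim (U.map g).le_nhds_lim

theorem limAddHom_eq_of_tendsto {f : ι → G} {a : G} (h : Tendsto f U (𝓝 a)) :
    U.limAddHom f = a :=
  lim_eq_iff_le_nhds.2 (by rw [coe_map]; exact h)

theorem limAddHom_eq_of_tendsto_sub {f g : ι → G} (h : Tendsto (f - g) U (𝓝 0)) :
    U.limAddHom f = U.limAddHom g := by
  rw [← sub_eq_zero, ← map_sub, limAddHom_eq_of_tendsto U h]

end Ultrafilter

namespace PadicInt

variable {p}

theorem norm_sub_le_of_toZModPow_eq {n : ℕ} {x y : ℤ_[p]} (h : toZModPow n x = toZModPow n y) :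
    ‖x - y‖ ≤ (p : ℝ) ^ (-(n : ℤ)) := by
  rw [norm_le_pow_iff_mem_span_pow, ← ker_toZModPow, RingHom.mem_ker, map_sub, h, sub_self]

theorem tendsto_of_toZModPow_succ_eq {g : ℕ → ℤ_[p]} {x : ℤ_[p]}
    (h : ∀ n, toZModPow (n + 1) (g n) = toZModPow (n + 1) x) : Tendsto g atTop (𝓝 x) := by
  have hp : (1 : ℝ) < p := mod_cast (Fact.out : p.Prime).one_lt
  have hbound : Tendsto (fun n : ℕ => (p : ℝ)⁻¹ ^ (n + 1)) atTop (𝓝 0) :=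
    (tendsto_pow_atTop_nhds_zero_of_lt_one (by positivity) (inv_lt_one_of_one_lt₀ hp)).comp
      (tendsto_add_atTop_nat 1)
  refine tendsto_iff_norm_sub_tendsto_zero.2 <|
    squeeze_zero (fun _ => norm_nonneg _) (fun n => ?_) hbound
  calc ‖g n - x‖ ≤ (p : ℝ) ^ (-((n + 1 : ℕ) : ℤ)) := norm_sub_le_of_toZModPow_eq (h n)
    _ = (p : ℝ)⁻¹ ^ (n + 1) := by rw [zpow_neg, zpow_natCast, inv_pow]

theorem toZModPow_natCast_val {n : ℕ} (a : ZMod (p ^ n)) : toZModPow n (a.val : ℤ_[p]) = a := by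
  rw [map_natCast, ZMod.natCast_zmod_val]

end PadicInt

open PadicInt

noncomputable def residueRetraction : (∀ n : ℕ, ZMod (p ^ (n + 1))) →+ ℤ_[p] :=
  AddMonoidHom.mk' (fun y => (hyperfilter ℕ).limAddHom fun n => ((y n).val : ℤ_[p]))
    fun y z => by
      have hdefect : Tendsto (fun n => (((y + z) n).val : ℤ_[p]) - ((y n).val + (z n).val))
          atTop (𝓝 0) :=
        tendsto_of_toZModPow_succ_eq fun n => by
          simp only [map_sub, map_add, toZModPow_natCast_val, Pi.add_apply, sub_self, map_zero]
      rw [← map_add]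
      exact Ultrafilter.limAddHom_eq_of_tendsto_sub _ (hdefect.mono_left Nat.hyperfilter_le_atTop)

theorem residueRetraction_padicDiag (x : ℤ_[p]) : residueRetraction p (padicDiag p x) = x :=
  Ultrafilter.limAddHom_eq_of_tendsto _ <|
    (tendsto_of_toZModPow_succ_eq fun _ => toZModPow_natCast_val _).mono_left
      Nat.hyperfilter_le_atTop

/-- `ℤ_[p]`, embedded diagonally, is a pure subgroup of `∏_{n > 0} ℤ/pⁿℤ` (every element of
the image divisible by `k` in the product is divisible by `k` in the image), and since
`ℤ_[p]` is pure-injective the inclusion splits: there is a homomorphism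
`u : ∏_{n > 0} ℤ/pⁿℤ →+ ℤ_[p]` restricting to the identity on `ℤ_[p]`. -/
theorem stmt_16 :
    (∀ (k : ℤ) (x : ℤ_[p]) (y : ∀ n : ℕ, ZMod (p ^ (n + 1))),
      padicDiag p x = k • y → ∃ z : ℤ_[p], x = k • z) ∧
    ∃ u : (∀ n : ℕ, ZMod (p ^ (n + 1))) →+ ℤ_[p], ∀ x : ℤ_[p], u (padicDiag p x) = x := by
  refine ⟨fun k x y h => ⟨residueRetraction p y, ?_⟩,
    residueRetraction p, residueRetraction_padicDiag p⟩
  rw [← residueRetraction_padicDiag p x, h, map_zsmul]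
end

section
/- There is a short exact sequence of abelian groups 0 → Ẑ_p → ∏_{n>0} ℤ/p^nℤ → ∏_{n>0} ℤ/p^nℤ → 0, where the first map is the diagonal embedding of the p-adic integers and the second sends (a_n + p^nℤ)_n to (a_{n+1} - a_n + p^nℤ)_n; moreover this sequence splits, so Ẑ_p × ∏_{n>0} ℤ/p^nℤ ≅ ∏_{n>0} ℤ/p^nℤ. -/
/-!
The kernel of the difference map consists of the compatible sequences, which are exactly the
residues of `p`-adic integers; a preimage under the difference map is built inductively by lifting
along the surjections `ℤ/p^{n+2}ℤ → ℤ/p^{n+1}ℤ`.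

For the splitting, send `(aⱼ)ⱼ` to the sequence whose `k`-th term is the limit of `aⱼ mod p^{k+1}`
along a non-principal ultrafilter on `j`. Since `ℤ/p^{k+1}ℤ` is finite these limits exist; they
are additive and compatible, so they define a `p`-adic integer, and on the diagonal image of `x`
the sequence is eventually constant, so `x` is recovered. This is the compactness behind the
pure-injectivity of `ℤ_[p]`.
-/

variable (p : ℕ) [Fact p.Prime]

/-- The homomorphism `∏_{n > 0} ℤ/pⁿℤ → ∏_{n > 0} ℤ/pⁿℤ` sending `(aₙ)ₙ` to
`(a_{n+1} - aₙ)ₙ` (where `a_{n+1}` is reduced mod `pⁿ`). -/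
noncomputable def padicPi : (∀ n : ℕ, ZMod (p ^ (n + 1))) →+ ∀ n : ℕ, ZMod (p ^ (n + 1)) :=
  AddMonoidHom.mk'
    (fun a n => ZMod.castHom (pow_dvd_pow p (Nat.le_succ (n + 1))) (ZMod (p ^ (n + 1)))
        (a (n + 1)) - a n)
    (fun a b => by funext n; simp [map_add]; ring)

open Filter Function

namespace Ultrafilter

variable {α β γ : Type*} [Finite β] [Finite γ] (U : Ultrafilter α)

noncomputable def limFinite (f : α → β) : β :=
  (U.map f).eq_pure_of_finite.choose

theorem eventually_eq_limFinite (f : α → β) : ∀ᶠ a in U, f a = U.limFinite f := by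
  change {U.limFinite f} ∈ U.map f
  rw [(U.map f).eq_pure_of_finite.choose_spec]
  exact mem_pure.2 rfl

theorem limFinite_eq_of_eventually {f : α → β} {b : β} (h : ∀ᶠ a in U, f a = b) :
    U.limFinite f = b := by
  obtain ⟨a, ha, rfl⟩ := ((U.eventually_eq_limFinite f).and h).exists
  exact ha.symm

theorem limFinite_comp (φ : β → γ) (f : α → β) : U.limFinite (φ ∘ f) = φ (U.limFinite f) :=
  U.limFinite_eq_of_eventually <| (U.eventually_eq_limFinite f).mono fun _ h => congrArg φ h

theorem limFinite_congr {f g : α → β} (h : ∀ᶠ a in U, f a = g a) :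
    U.limFinite f = U.limFinite g :=
  U.limFinite_eq_of_eventually <| h.mp <| (U.eventually_eq_limFinite g).mono fun _ hg hfg =>
    hfg.trans hg

end Ultrafilter

theorem Nat.eventually_ge_hyperfilter (k : ℕ) : ∀ᶠ j in hyperfilter ℕ, k ≤ j :=
  Nat.hyperfilter_le_atTop (eventually_ge_atTop k)

theorem exists_sub_eq_of_surjective {G : ℕ → Type*} [∀ n, AddGroup (G n)]
    {π : ∀ n, G (n + 1) → G n} (hπ : ∀ n, Surjective (π n)) (b : ∀ n, G n) :
    ∃ a : ∀ n, G n, ∀ n, π n (a (n + 1)) - a n = b n :=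
  ⟨fun n => Nat.rec (motive := G) 0 (fun n aₙ => surjInv (hπ n) (b n + aₙ)) n,
    fun n => by simp only [surjInv_eq, add_sub_cancel_right]⟩

theorem AddMonoidHom.exists_retraction_of_projection {A B : Type*} [AddGroup A] [AddGroup B]
    {f : A →+ B} (hf : Injective f) (r : B →+ B) (hr_mem : ∀ b, r b ∈ f.range)
    (hr_fix : ∀ a, r (f a) = f a) : ∃ u : B →+ A, ∀ a, u (f a) = a :=
  ⟨(ofInjective hf).symm.toAddMonoidHom.comp (r.codRestrict f.range hr_mem),
    fun a => (ofInjective hf).symm_apply_eq.2 (Subtype.ext (hr_fix a))⟩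

theorem padicDiag_apply (x : ℤ_[p]) (n : ℕ) : padicDiag p x n = PadicInt.toZModPow (n + 1) x :=
  rfl

omit [Fact p.Prime] in
theorem padicPi_apply (a : ∀ n : ℕ, ZMod (p ^ (n + 1))) (n : ℕ) :
    padicPi p a n = ZMod.cast (a (n + 1)) - a n :=
  rfl

omit [Fact p.Prime] in
theorem padicPi_eq_zero_iff {a : ∀ n : ℕ, ZMod (p ^ (n + 1))} :
    padicPi p a = 0 ↔ ∀ n, (ZMod.cast (a (n + 1)) : ZMod (p ^ (n + 1))) = a n := by
  simp only [funext_iff, padicPi_apply, Pi.zero_apply, sub_eq_zero]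

theorem padicDiag_injective : Injective (padicDiag p) := by
  intro x y h
  refine PadicInt.ext_of_toZModPow.1 fun n => ?_
  rw [← PadicInt.cast_toZModPow n (n + 1) n.le_succ, ← PadicInt.cast_toZModPow n (n + 1) n.le_succ]
  exact congrArg ZMod.cast (congrFun h n)

theorem padicPi_padicDiag (x : ℤ_[p]) : padicPi p (padicDiag p x) = 0 :=
  (padicPi_eq_zero_iff p).2 fun n => PadicInt.cast_toZModPow _ _ (n + 1).le_succ x

theorem mem_range_padicDiag_of_compat {a : ∀ n : ℕ, ZMod (p ^ (n + 1))}
    (ha : ∀ n, (ZMod.cast (a (n + 1)) : ZMod (p ^ (n + 1))) = a n) : a ∈ (padicDiag p).range := by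
  set f : ℕ → ℤ := fun n => (a n).val
  have hdvd : ∀ n, (p : ℤ) ^ n ∣ f (n + 1) - f n := by
    intro n
    refine (pow_dvd_pow _ n.le_succ).trans ?_
    rw [← Nat.cast_pow, ← ZMod.intCast_eq_intCast_iff_dvd_sub, Int.cast_natCast, Int.cast_natCast, ZMod.natCast_zmod_val, ZMod.natCast_val, ha]
  -- the limit of the lifts `f n` is congruent to `f (n + 1)`, hence to `a n`, modulo `p ^ (n + 1)`
  refine ⟨PadicInt.ofIntSeq _ (PadicInt.isCauSeq_padicNorm_of_pow_dvd_sub f p hdvd),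
    funext fun n => ?_⟩
  rw [padicDiag_apply, PadicInt.toZModPow_ofIntSeq_of_pow_dvd_sub f p hdvd, Int.cast_natCast,
    ZMod.natCast_val, ha]

theorem padicDiag_range_eq_ker : (padicDiag p).range = (padicPi p).ker := by
  ext a
  refine ⟨?_, fun ha => mem_range_padicDiag_of_compat p ((padicPi_eq_zero_iff p).1 ha)⟩
  rintro ⟨x, rfl⟩
  exact padicPi_padicDiag p x

omit [Fact p.Prime] in
theorem padicPi_surjective : Surjective (padicPi p) := fun b =>
  (exists_sub_eq_of_surjective (fun n => ZMod.castHom_surjective (pow_dvd_pow p (n + 1).le_succ))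
    b).imp fun _ ha => funext ha

noncomputable def padicUltralim : (∀ n : ℕ, ZMod (p ^ (n + 1))) →+ ∀ n : ℕ, ZMod (p ^ (n + 1)) where
  toFun a k := (hyperfilter ℕ).limFinite fun j => ZMod.cast (a j)
  map_zero' := funext fun _ =>
    Ultrafilter.limFinite_eq_of_eventually _ (.of_forall fun _ => ZMod.cast_zero)
  map_add' a b := funext fun k => by
    refine Ultrafilter.limFinite_eq_of_eventually _ ?_
    filter_upwards [Nat.eventually_ge_hyperfilter k,
      Ultrafilter.eventually_eq_limFinite _ fun j => (ZMod.cast (a j) : ZMod (p ^ (k + 1))),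
      Ultrafilter.eventually_eq_limFinite _ fun j => (ZMod.cast (b j) : ZMod (p ^ (k + 1)))]
      with j hj ha hb
    rw [Pi.add_apply, ZMod.cast_add (pow_dvd_pow p (by omega)), ha, hb, Pi.add_apply]

theorem padicUltralim_apply (a : ∀ n : ℕ, ZMod (p ^ (n + 1))) (k : ℕ) :
    padicUltralim p a k = (hyperfilter ℕ).limFinite fun j => ZMod.cast (a j) :=
  rfl

theorem padicUltralim_padicDiag (x : ℤ_[p]) : padicUltralim p (padicDiag p x) = padicDiag p x := by
  funext k
  refine Ultrafilter.limFinite_eq_of_eventually _ ?_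
  filter_upwards [Nat.eventually_ge_hyperfilter k] with j hj
  exact PadicInt.cast_toZModPow _ _ (by omega) x

theorem padicPi_padicUltralim (a : ∀ n : ℕ, ZMod (p ^ (n + 1))) :
    padicPi p (padicUltralim p a) = 0 := by
  refine (padicPi_eq_zero_iff p).2 fun k => ?_
  rw [padicUltralim_apply, padicUltralim_apply,
    ← Ultrafilter.limFinite_comp _ (ZMod.cast : ZMod (p ^ (k + 1 + 1)) → ZMod (p ^ (k + 1)))]
  refine Ultrafilter.limFinite_congr _ ?_
  filter_upwards [Nat.eventually_ge_hyperfilter (k + 1)] with j hj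
  exact RingHom.congr_fun (ZMod.castHom_comp (pow_dvd_pow p (k + 1).le_succ)
    (pow_dvd_pow p (by omega : k + 2 ≤ j + 1))) (a j)

theorem exists_retraction_padicDiag :
    ∃ u : (∀ n : ℕ, ZMod (p ^ (n + 1))) →+ ℤ_[p], ∀ x : ℤ_[p], u (padicDiag p x) = x :=
  (padicDiag p).exists_retraction_of_projection (padicDiag_injective p) (padicUltralim p)
    (fun a => (padicDiag_range_eq_ker p).symm ▸ padicPi_padicUltralim p a)
    (padicUltralim_padicDiag p)

/-- There is a short exact sequence `0 → ℤ_[p] → ∏_{n>0} ℤ/pⁿℤ → ∏_{n>0} ℤ/pⁿℤ → 0`, where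
the first map is the diagonal embedding and the second sends `(aₙ)ₙ` to `(a_{n+1} - aₙ)ₙ`;
moreover this sequence splits, so `ℤ_[p] × ∏_{n>0} ℤ/pⁿℤ ≅ ∏_{n>0} ℤ/pⁿℤ`. -/
theorem stmt_17 :
    Function.Injective (padicDiag p) ∧ Function.Surjective (padicPi p) ∧
    (padicDiag p).range = (padicPi p).ker ∧
    (∃ u : (∀ n : ℕ, ZMod (p ^ (n + 1))) →+ ℤ_[p], ∀ x : ℤ_[p], u (padicDiag p x) = x) ∧
    Nonempty ((ℤ_[p] × ∀ n : ℕ, ZMod (p ^ (n + 1))) ≃+ ∀ n : ℕ, ZMod (p ^ (n + 1))) := by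
  obtain ⟨u, hu⟩ := exists_retraction_padicDiag p
  have hexact : Exact (padicDiag p).toIntLinearMap (padicPi p).toIntLinearMap :=
    AddMonoidHom.exact_iff.2 (padicDiag_range_eq_ker p).symm
  refine ⟨padicDiag_injective p, padicPi_surjective p, padicDiag_range_eq_ker p, ⟨u, hu⟩, ?_⟩
  obtain ⟨e, -⟩ := hexact.splitInjectiveEquiv (padicPi_surjective p)
    ⟨u.toIntLinearMap, LinearMap.ext hu⟩
  exact ⟨e.symm.toAddEquiv⟩
end
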